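/- arXiv:2105.11890 — 3 statements merged into one kernel-verified Lean document; each statement's English description precedes it below -/
import Mathlib

section
/- Let f : [0,∞) → [0,∞) be continuous with lim_{s→∞} f(s)/s^p = b for some b > 0 and p > 1. Define f̃ : [0,∞) × ℝ → ℝ by f̃(λ, s) = λ^{p/(p−1)} f(λ^{−1/(p−1)} |s|) for λ > 0, and f̃(0, s) = b |s|^p. Then f̃ is continuous on [0,∞) × ℝ. -/
/-- If `f : [0,∞) → [0,∞)` is continuous with `f(s)/s^p → b > 0` as `s → ∞`
(with `p > 1`), and `f̃ : ℝ × ℝ → ℝ` is defined by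
`f̃(λ, s) = λ^{p/(p−1)} f(λ^{−1/(p−1)} |s|)` for `λ > 0` and `f̃(0, s) = b |s|^p`,
then `f̃` is continuous on `[0,∞) × ℝ`. -/
theorem stmt_4 (f : ℝ → ℝ) (b p : ℝ)
    (hf_cont : ContinuousOn f (Set.Ici 0))
    (hf_nonneg : ∀ s, 0 ≤ s → 0 ≤ f s)
    (hb : 0 < b) (hp : 1 < p)
    (hlim : Filter.Tendsto (fun s => f s / s ^ p) Filter.atTop (nhds b))
    (ftilde : ℝ × ℝ → ℝ)
    (hpos : ∀ lam s : ℝ, 0 < lam →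
      ftilde (lam, s) = lam ^ (p / (p - 1)) * f (lam ^ (-(1 / (p - 1))) * |s|))
    (hzero : ∀ s : ℝ, ftilde (0, s) = b * |s| ^ p) :
    ContinuousOn ftilde (Set.Ici 0 ×ˢ Set.univ) := by
  have hp1 : (0:ℝ) < p - 1 := by linarith
  have hppos : (0:ℝ) < p := by linarith
  set e : ℝ := 1 / (p - 1) with he
  set q : ℝ := p / (p - 1) with hq
  have hqpos : 0 < q := div_pos hppos hp1
  have hepos : 0 < e := by positivity
  -- key algebraic identity
  have key : ∀ lam s : ℝ, 0 < lam → lam ^ q * (lam ^ (-e) * |s|) ^ p = |s| ^ p := by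
    intro lam s hlam
    have heq : -e * p = -q := by rw [he, hq]; ring
    have h1 : (lam ^ (-e)) ^ p = lam ^ (-q) := by
      rw [← Real.rpow_mul hlam.le, heq]
    calc lam ^ q * (lam ^ (-e) * |s|) ^ p
        = lam ^ q * ((lam ^ (-e)) ^ p * |s| ^ p) := by
          rw [Real.mul_rpow (Real.rpow_nonneg hlam.le _) (abs_nonneg s)]
      _ = lam ^ q * lam ^ (-q) * |s| ^ p := by rw [h1]; ring
      _ = |s| ^ p := by
          rw [← Real.rpow_add hlam, add_neg_cancel, Real.rpow_zero, one_mul]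
  -- a global growth bound on f
  obtain ⟨M, hM1, hM⟩ : ∃ M : ℝ, 1 ≤ M ∧ ∀ u, M ≤ u → f u ≤ (b + 1) * u ^ p := by
    have hev : ∀ᶠ u in Filter.atTop, f u / u ^ p < b + 1 ∧ 1 ≤ u :=
      (hlim.eventually_lt_const (by linarith)).and (Filter.eventually_ge_atTop 1)
    obtain ⟨a, ha⟩ := Filter.eventually_atTop.mp hev
    refine ⟨max a 1, le_max_right _ _, fun u hu => ?_⟩
    have hua : a ≤ u := le_trans (le_max_left _ _) hu
    obtain ⟨h1, h2⟩ := ha u hua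
    have hup : (0:ℝ) < u ^ p := Real.rpow_pos_of_pos (by linarith) _
    calc f u = f u / u ^ p * u ^ p := by field_simp
      _ ≤ (b + 1) * u ^ p := by nlinarith
  obtain ⟨C0, hC0⟩ := (isCompact_Icc (a := (0:ℝ)) (b := M)).exists_bound_of_continuousOn
    (hf_cont.mono (fun x hx => hx.1))
  set C : ℝ := max C0 0 with hCdef
  have hCnn : 0 ≤ C := le_max_right _ _
  have hCb : ∀ u : ℝ, 0 ≤ u → f u ≤ C + (b + 1) * u ^ p := by
    intro u hu
    have hupnn : 0 ≤ (b + 1) * u ^ p :=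
      mul_nonneg (by linarith) (Real.rpow_nonneg hu _)
    rcases le_total u M with h | h
    · have := hC0 u ⟨hu, h⟩
      have : f u ≤ C0 := le_trans (le_abs_self _) (by simpa using this)
      have : f u ≤ C := le_trans this (le_max_left _ _)
      linarith
    · have := hM u h
      linarith
  -- main argument
  rintro ⟨lam, s0⟩ ⟨hlam, -⟩
  simp only [Set.mem_Ici] at hlam
  rcases hlam.lt_or_eq with hlam | hlam
  · -- case lam > 0
    have hg : ContinuousWithinAt (fun x : ℝ × ℝ => x.1 ^ q * f (x.1 ^ (-e) * |x.2|))
        (Set.Ici 0 ×ˢ Set.univ) (lam, s0) := by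
      apply ContinuousWithinAt.mul
      · exact ((Real.continuousAt_rpow_const lam q (Or.inl hlam.ne')).comp (x := (lam, s0))
          continuous_fst.continuousAt).continuousWithinAt
      · have hinner : ContinuousAt (fun x : ℝ × ℝ => x.1 ^ (-e) * |x.2|) (lam, s0) := by
          exact ((Real.continuousAt_rpow_const lam (-e) (Or.inl hlam.ne')).comp (x := (lam, s0))
            continuous_fst.continuousAt).mul (continuous_abs.comp continuous_snd).continuousAt
        refine ContinuousWithinAt.comp (hf_cont _ ?_) hinner.continuousWithinAt ?_
        · exact mul_nonneg (Real.rpow_nonneg hlam.le _) (abs_nonneg _)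
        · rintro ⟨x1, x2⟩ ⟨hx1, -⟩
          exact mul_nonneg (Real.rpow_nonneg hx1 _) (abs_nonneg _)
    have hev : ftilde =ᶠ[nhdsWithin (lam, s0) (Set.Ici 0 ×ˢ Set.univ)]
        (fun x : ℝ × ℝ => x.1 ^ q * f (x.1 ^ (-e) * |x.2|)) := by
      have hmem : {x : ℝ × ℝ | 0 < x.1} ∈ nhds (lam, s0) :=
        (isOpen_lt continuous_const continuous_fst).mem_nhds hlam
      filter_upwards [mem_nhdsWithin_of_mem_nhds hmem] with x hx
      obtain ⟨x1, x2⟩ := x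
      exact hpos x1 x2 hx
    exact hg.congr_of_eventuallyEq hev (hpos lam s0 hlam)
  · -- case lam = 0
    subst hlam
    show Filter.Tendsto ftilde (nhdsWithin ((0:ℝ), s0) (Set.Ici 0 ×ˢ Set.univ))
      (nhds (ftilde (0, s0)))
    rw [hzero s0]
    rcases eq_or_ne s0 0 with hs0 | hs0
    · -- s0 = 0 : squeeze
      subst hs0
      have h00 : b * |(0:ℝ)| ^ p = 0 := by
        simp [Real.zero_rpow hppos.ne']
      rw [h00]
      apply squeeze_zero' (g := fun x : ℝ × ℝ => C * x.1 ^ q + (b + 1) * |x.2| ^ p)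
      · filter_upwards [self_mem_nhdsWithin] with x hx
        obtain ⟨x1, x2⟩ := x
        obtain ⟨hx1, -⟩ := hx
        rcases (show (0:ℝ) ≤ x1 from hx1).lt_or_eq with h1 | h1
        · rw [hpos x1 x2 h1]
          exact mul_nonneg (Real.rpow_nonneg h1.le _) (hf_nonneg _
            (mul_nonneg (Real.rpow_nonneg h1.le _) (abs_nonneg _)))
        · have h1' : x1 = 0 := h1.symm
          rw [h1', hzero]
          positivity
      · filter_upwards [self_mem_nhdsWithin] with x hx
        obtain ⟨x1, x2⟩ := x
        obtain ⟨hx1, -⟩ := hx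
        simp only [Set.mem_Ici] at hx1
        rcases hx1.lt_or_eq with h1 | h1
        · rw [hpos x1 x2 h1]
          have hu : 0 ≤ x1 ^ (-e) * |x2| :=
            mul_nonneg (Real.rpow_nonneg hx1 _) (abs_nonneg _)
          calc x1 ^ q * f (x1 ^ (-e) * |x2|)
              ≤ x1 ^ q * (C + (b + 1) * (x1 ^ (-e) * |x2|) ^ p) :=
                mul_le_mul_of_nonneg_left (hCb _ hu) (Real.rpow_nonneg hx1 _)
            _ = C * x1 ^ q + (b + 1) * (x1 ^ q * (x1 ^ (-e) * |x2|) ^ p) := by ring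
            _ = C * x1 ^ q + (b + 1) * |x2| ^ p := by rw [key x1 x2 h1]
        · have h1' : x1 = 0 := h1.symm
          rw [h1', hzero, Real.zero_rpow hqpos.ne', mul_zero, zero_add]
          have h2 : 0 ≤ |x2| ^ p := Real.rpow_nonneg (abs_nonneg _) _
          nlinarith
      · have h1 : Filter.Tendsto (fun x : ℝ × ℝ => x.1) (nhds ((0:ℝ), (0:ℝ)))
            (nhds 0) := continuous_fst.tendsto' _ _ rfl
        have h2 : Filter.Tendsto (fun x : ℝ × ℝ => |x.2|) (nhds ((0:ℝ), (0:ℝ)))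
            (nhds 0) := (continuous_abs.comp continuous_snd).tendsto' _ _ (by simp)
        have hq1 : Filter.Tendsto (fun t : ℝ => t ^ q) (nhds 0) (nhds ((0:ℝ) ^ q)) :=
          Real.continuousAt_rpow_const 0 q (Or.inr hqpos.le)
        rw [Real.zero_rpow hqpos.ne'] at hq1
        have hp1' : Filter.Tendsto (fun t : ℝ => t ^ p) (nhds 0) (nhds ((0:ℝ) ^ p)) :=
          Real.continuousAt_rpow_const 0 p (Or.inr hppos.le)
        rw [Real.zero_rpow hppos.ne'] at hp1'
        have hsum := (tendsto_const_nhds (x := C)).mul (hq1.comp h1) |>.add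
          ((tendsto_const_nhds (x := b + 1)).mul (hp1'.comp h2))
        have hsum' : Filter.Tendsto (fun x : ℝ × ℝ => C * x.1 ^ q + (b + 1) * |x.2| ^ p)
            (nhds ((0:ℝ), (0:ℝ))) (nhds (C * 0 + (b + 1) * 0)) := hsum
        simpa using hsum'.mono_left nhdsWithin_le_nhds
    · -- s0 ≠ 0
      have hsplit : nhdsWithin ((0:ℝ), s0) (Set.Ici 0 ×ˢ Set.univ) =
          nhdsWithin ((0:ℝ), s0) (({(0:ℝ)} : Set ℝ) ×ˢ Set.univ) ⊔
          nhdsWithin ((0:ℝ), s0) (Set.Ioi (0:ℝ) ×ˢ Set.univ) := by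
        rw [← nhdsWithin_union, ← Set.union_prod, Set.singleton_union, Set.Ioi_insert]
      rw [hsplit, Filter.tendsto_sup]
      constructor
      · -- on {0} × univ
        have habs : Filter.Tendsto (fun x : ℝ × ℝ => |x.2|) (nhds ((0:ℝ), s0))
            (nhds |s0|) := (continuous_abs.comp continuous_snd).tendsto' _ _ rfl
        have hrp : Filter.Tendsto (fun t : ℝ => t ^ p) (nhds |s0|) (nhds (|s0| ^ p)) :=
          Real.continuousAt_rpow_const |s0| p (Or.inr hppos.le)
        have ht : Filter.Tendsto (fun x : ℝ × ℝ => b * |x.2| ^ p)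
            (nhdsWithin ((0:ℝ), s0) (({(0:ℝ)} : Set ℝ) ×ˢ Set.univ))
            (nhds (b * |s0| ^ p)) :=
          ((tendsto_const_nhds (x := b)).mul (hrp.comp habs)).mono_left nhdsWithin_le_nhds
        refine Filter.Tendsto.congr' ?_ ht
        filter_upwards [self_mem_nhdsWithin] with x hx
        obtain ⟨x1, x2⟩ := x
        obtain ⟨hx1, -⟩ := hx
        have hx1' : x1 = 0 := hx1
        rw [hx1', hzero]
      · -- on Ioi 0 × univ
        set l := nhdsWithin ((0:ℝ), s0) (Set.Ioi (0:ℝ) ×ˢ Set.univ) with hl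
        have hfst : Filter.Tendsto (fun x : ℝ × ℝ => x.1) l (nhdsWithin 0 (Set.Ioi 0)) := by
          rw [tendsto_nhdsWithin_iff]
          constructor
          · exact (continuous_fst.tendsto _).mono_left nhdsWithin_le_nhds
          · filter_upwards [self_mem_nhdsWithin] with x hx using hx.1
        have hrpow : Filter.Tendsto (fun t : ℝ => t ^ (-e)) (nhdsWithin 0 (Set.Ioi 0))
            Filter.atTop := by
          have h1 : Filter.Tendsto (fun t : ℝ => t ^ e) (nhdsWithin 0 (Set.Ioi 0))
              (nhdsWithin 0 (Set.Ioi 0)) := by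
            rw [tendsto_nhdsWithin_iff]
            constructor
            · have hca : ContinuousAt (fun t : ℝ => t ^ e) 0 :=
                Real.continuousAt_rpow_const 0 e (Or.inr hepos.le)
              have h0 : (0:ℝ) ^ e = 0 := Real.zero_rpow hepos.ne'
              have hcw : Filter.Tendsto (fun t : ℝ => t ^ e) (nhdsWithin 0 (Set.Ioi 0))
                  (nhds ((0:ℝ) ^ e)) := hca.continuousWithinAt
              rwa [h0] at hcw
            · filter_upwards [self_mem_nhdsWithin] with t ht
              exact Real.rpow_pos_of_pos ht _
          have h2 := tendsto_inv_nhdsGT_zero.comp h1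
          refine Filter.Tendsto.congr' ?_ h2
          filter_upwards [self_mem_nhdsWithin] with t ht
          simp only [Function.comp_apply]
          rw [← Real.rpow_neg ht.le]
        have hu : Filter.Tendsto (fun x : ℝ × ℝ => x.1 ^ (-e) * |x.2|) l Filter.atTop := by
          apply Filter.Tendsto.atTop_mul_pos (abs_pos.mpr hs0) (hrpow.comp hfst)
          exact ((continuous_abs.comp continuous_snd).tendsto _).mono_left nhdsWithin_le_nhds
        have hq' : Filter.Tendsto
            (fun x : ℝ × ℝ => f (x.1 ^ (-e) * |x.2|) / (x.1 ^ (-e) * |x.2|) ^ p) l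
            (nhds b) := hlim.comp hu
        have habsp : Filter.Tendsto (fun x : ℝ × ℝ => |x.2| ^ p) l (nhds (|s0| ^ p)) := by
          have habs2 : Filter.Tendsto (fun x : ℝ × ℝ => |x.2|) (nhds ((0:ℝ), s0))
              (nhds |s0|) := (continuous_abs.comp continuous_snd).tendsto' _ _ rfl
          have hrp : Filter.Tendsto (fun t : ℝ => t ^ p) (nhds |s0|) (nhds (|s0| ^ p)) :=
            Real.continuousAt_rpow_const |s0| p (Or.inr hppos.le)
          exact (hrp.comp habs2).mono_left nhdsWithin_le_nhds
        have hfinal := hq'.mul habsp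
        refine Filter.Tendsto.congr' ?_ (by rwa [mul_comm] at hfinal)
        have hne : {x : ℝ × ℝ | x.2 ≠ 0} ∈ l :=
          mem_nhdsWithin_of_mem_nhds
            ((isOpen_compl_singleton.preimage continuous_snd).mem_nhds hs0)
        filter_upwards [self_mem_nhdsWithin, hne] with x hx hx2
        obtain ⟨x1, x2⟩ := x
        obtain ⟨hx1, -⟩ := hx
        have h1 : (0:ℝ) < x1 := hx1
        rw [hpos x1 x2 h1]
        have hupos : 0 < x1 ^ (-e) * |x2| :=
          mul_pos (Real.rpow_pos_of_pos h1 _) (abs_pos.mpr hx2)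
        have hup : (0:ℝ) < (x1 ^ (-e) * |x2|) ^ p := Real.rpow_pos_of_pos hupos _
        have hk := key x1 x2 h1
        rw [← hk]
        field_simp
end

section
/- Let N ≥ 3 be an integer and let p be a real number with 1 < p < N/(N−2). Let q : ℕ → ℝ satisfy q(0) = 2(N−1)/(p(N−2)) and q(i+1) = (N−1)q(i)/(p(N−1−q(i))) for all i ∈ ℕ, and assume 0 < q(i) < N−1 for all i ∈ ℕ. Then the sequence q is strictly increasing. -/
/-- For `N ≥ 3` and `1 < p < N/(N−2)`, the bootstrap sequence
`q(0) = 2(N−1)/(p(N−2))`, `q(i+1) = (N−1)q(i)/(p(N−1−q(i)))`, assumed to stay in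
`(0, N−1)`, is strictly increasing. -/
theorem stmt_6 (N : ℕ) (hN : 3 ≤ N) (p : ℝ) (hp : 1 < p)
    (hp' : p < (N : ℝ) / ((N : ℝ) - 2))
    (q : ℕ → ℝ)
    (hq0 : q 0 = 2 * ((N : ℝ) - 1) / (p * ((N : ℝ) - 2)))
    (hrec : ∀ i : ℕ, q (i + 1) = ((N : ℝ) - 1) * q i / (p * ((N : ℝ) - 1 - q i)))
    (hbdd : ∀ i : ℕ, 0 < q i ∧ q i < (N : ℝ) - 1) :
    StrictMono q := by
  have hN3 : (3 : ℝ) ≤ (N : ℝ) := by exact_mod_cast hN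
  have hp0 : (0 : ℝ) < p := lt_trans one_pos hp
  have hN2 : (0 : ℝ) < (N : ℝ) - 2 := by linarith
  -- key step lemma
  have step : ∀ i, ((N : ℝ) - 1) * (p - 1) < p * q i → q i < q (i + 1) := by
    intro i h
    obtain ⟨hq, hq'⟩ := hbdd i
    have hD : 0 < p * ((N : ℝ) - 1 - q i) := by
      apply mul_pos hp0; linarith
    rw [hrec i, lt_div_iff₀ hD]
    nlinarith
  -- invariant
  have inv : ∀ i, ((N : ℝ) - 1) * (p - 1) < p * q i := by
    intro i
    induction i with
    | zero =>
      rw [hq0]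
      have hd : p * ((N : ℝ) - 2) > 0 := mul_pos hp0 hN2
      rw [mul_div_assoc', lt_div_iff₀ hd]
      have hkey : p * ((N : ℝ) - 2) < (N : ℝ) := (lt_div_iff₀ hN2).mp hp'
      nlinarith [mul_pos hp0 hN2, mul_pos hp0 hp0]
    | succ n ih =>
      have := step n ih
      nlinarith
  exact strictMono_nat_of_lt_succ fun n => step n (inv n)
end

section
/- Let N ≥ 3 be an integer and let p be a real number with 1 < p < N/(N−2). Then there is no sequence q : ℕ → ℝ such that q(0) = 2(N−1)/(p(N−2)), q(i+1) = (N−1)q(i)/(p(N−1−q(i))) for all i ∈ ℕ, and q(i) < N−1 for all i ∈ ℕ. Equivalently, any sequence starting at q(0) = 2(N−1)/(p(N−2)) and following this recursion must reach a value ≥ N−1 after finitely many steps. -/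
/-- For `N ≥ 3` and `1 < p < N/(N−2)`, there is no sequence following the
bootstrap recursion `q(0) = 2(N−1)/(p(N−2))`, `q(i+1) = (N−1)q(i)/(p(N−1−q(i)))` that
stays below `N−1` forever: any such sequence must reach a value `≥ N−1` in finitely
many steps. -/
theorem stmt_9 (N : ℕ) (hN : 3 ≤ N) (p : ℝ) (hp : 1 < p)
    (hp' : p < (N : ℝ) / ((N : ℝ) - 2)) :
    ¬ ∃ q : ℕ → ℝ,
      q 0 = 2 * ((N : ℝ) - 1) / (p * ((N : ℝ) - 2)) ∧
      (∀ i : ℕ, q (i + 1) = ((N : ℝ) - 1) * q i / (p * ((N : ℝ) - 1 - q i))) ∧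
      (∀ i : ℕ, q i < (N : ℝ) - 1) := by
  rintro ⟨q, hq0, hrec, hlt⟩
  have hN3 : (3:ℝ) ≤ (N:ℝ) := by exact_mod_cast hN
  set M : ℝ := (N:ℝ) - 1 with hM
  have hM0 : (0:ℝ) < M := by simp only [hM]; linarith
  have hp0 : (0:ℝ) < p := by linarith
  have hN2 : (0:ℝ) < (N:ℝ) - 2 := by linarith
  set qs : ℝ := M * (p - 1) / p with hqs
  have h1 : p * ((N:ℝ) - 2) < N := (lt_div_iff₀ hN2).mp hp'
  have hgap0 : 0 < q 0 - qs := by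
    rw [hq0, hqs, sub_pos, div_lt_div_iff₀ hp0 (by positivity)]
    have h2 : (0:ℝ) < 2 - (p - 1) * ((N:ℝ) - 2) := by nlinarith
    nlinarith [mul_pos (mul_pos hM0 hp0) h2]
  have key : ∀ i, p ^ i * (q 0 - qs) ≤ q i - qs := by
    intro i
    induction i with
    | zero => simp
    | succ i ih =>
      have hlti : q i < M := hlt i
      have hposgap : 0 < q i - qs := lt_of_lt_of_le (by positivity) ih
      have hden : 0 < M - q i := by linarith
      have hid : q (i + 1) - qs = (M / (M - q i)) * (q i - qs) := by
        rw [hrec i, hqs]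
        have hMq : M - q i ≠ 0 := ne_of_gt hden
        have hpne : p ≠ 0 := ne_of_gt hp0
        field_simp
        ring
      have hfac : p ≤ M / (M - q i) := by
        rw [le_div_iff₀ hden]
        have hqsle : qs ≤ q i := le_of_lt (by linarith)
        have : p * qs = M * (p - 1) := by
          rw [hqs]; field_simp
        nlinarith [hqsle, hp0]
      calc p ^ (i + 1) * (q 0 - qs) = p * (p ^ i * (q 0 - qs)) := by ring
        _ ≤ p * (q i - qs) := by
            exact mul_le_mul_of_nonneg_left ih (le_of_lt hp0)
        _ ≤ (M / (M - q i)) * (q i - qs) :=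
            mul_le_mul_of_nonneg_right hfac (le_of_lt hposgap)
        _ = q (i + 1) - qs := hid.symm
  obtain ⟨n, hn⟩ := pow_unbounded_of_one_lt ((M - qs) / (q 0 - qs)) hp
  have h2 : M - qs < p ^ n * (q 0 - qs) := by
    rw [div_lt_iff₀ hgap0] at hn
    linarith
  have h3 := key n
  have h4 : q n < M := hlt n
  linarith
end
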